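/- For every ε > 0 there exists a constant C_ε > 0, depending only on ε, n, δ, g, γ_D and the constants C_β, such that for every v = r v̂ with r = |v| ≥ 1: ∫_{{t∈ℝ : |t|≥1}} |t|·‖ΔṼ^l_{|v|,t}‖_∞ dt ≤ C_ε |v|^{−2γ_D+ε}. -/

import Mathlib

open scoped InnerProductSpace
open MeasureTheory Real Filter

noncomputable section

/-- sup-norm of the gradient of `W` : `‖∇W‖_∞ = sup_x |∇W(x)|`. -/
noncomputable def gradSup {n : ℕ} (W : EuclideanSpace ℝ (Fin n) → ℝ) : ℝ :=
  ⨆ x, ‖fderiv ℝ W x‖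

/-- sup-norm of the Laplacian of `W` : `‖ΔW‖_∞ = sup_x |ΔW(x)|`. -/
noncomputable def lapSup {n : ℕ} (W : EuclideanSpace ℝ (Fin n) → ℝ) : ℝ :=
  ⨆ x, |∑ j, fderiv ℝ (fun y => fderiv ℝ W y (EuclideanSpace.single j 1)) x
      (EuclideanSpace.single j 1)|

/-- the cut-off translated potential
`Ṽ_{|v|,t}(x) = V(x + v t + e₁ t²/2) · g(x/(λ₁|v|⟨t⟩))`, with `v = r·v̂`. -/
noncomputable def cutV {n : ℕ} (V g : EuclideanSpace ℝ (Fin n) → ℝ)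
    (lam : ℝ) (vhat e1 : EuclideanSpace ℝ (Fin n)) (r t : ℝ) :
    EuclideanSpace ℝ (Fin n) → ℝ :=
  fun x => V (x + (r * t) • vhat + (t ^ 2 / 2) • e1) *
    g ((lam * r * Real.sqrt (1 + t ^ 2))⁻¹ • x)

section Aux

variable {E : Type*} [NormedAddCommGroup E] [NormedSpace ℝ E]

lemma aux_fderiv_shift (f : E → ℝ) (a x : E) (h : DifferentiableAt ℝ f (x + a)) :
    fderiv ℝ (fun y => f (y + a)) x = fderiv ℝ f (x + a) := by
  have h1 : HasFDerivAt (fun y : E => y + a) (ContinuousLinearMap.id ℝ E) x :=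
    (hasFDerivAt_id x).add_const a
  have h2 := h.hasFDerivAt.comp x h1
  simpa [Function.comp_def] using h2.fderiv

lemma aux_fderiv_scale (f : E → ℝ) (c : ℝ) (x : E) (h : DifferentiableAt ℝ f (c • x)) :
    fderiv ℝ (fun y => f (c • y)) x = c • fderiv ℝ f (c • x) := by
  have h1 : HasFDerivAt (fun y : E => c • y) (c • ContinuousLinearMap.id ℝ E) x :=
    (hasFDerivAt_id x).const_smul c
  have h2 : HasFDerivAt (fun y => f (c • y))
      ((fderiv ℝ f (c • x)).comp (c • ContinuousLinearMap.id ℝ E)) x :=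
    h.hasFDerivAt.comp x h1
  rw [h2.fderiv]
  ext w
  simp [mul_comm]

lemma aux_diff_fderiv_apply {f : E → ℝ} (hf : ContDiff ℝ 2 f) (u : E) :
    Differentiable ℝ (fun y => fderiv ℝ f y u) :=
  ((hf.fderiv_right (m := 1) (by norm_num)).clm_apply contDiff_const).differentiable (by norm_num)

lemma aux_inner_fderiv_formula (V G : E → ℝ) (hV : ContDiff ℝ 2 V) (hG : ContDiff ℝ 2 G)
    (a : E) (c : ℝ) (u : E) :
    (fun y => fderiv ℝ (fun z => V (z + a) * G (c • z)) y u) =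
      fun y => V (y + a) * (c * fderiv ℝ G (c • y) u) +
        G (c • y) * fderiv ℝ V (y + a) u := by
  have hVd : Differentiable ℝ V := hV.differentiable (by norm_num)
  have hGd : Differentiable ℝ G := hG.differentiable (by norm_num)
  funext y
  have d1 : DifferentiableAt ℝ (fun z : E => V (z + a)) y :=
    (hVd (y + a)).comp y (differentiable_id.add_const a).differentiableAt
  have d2 : DifferentiableAt ℝ (fun z : E => G (c • z)) y :=
    (hGd (c • y)).comp y ((differentiable_id.const_smul c).differentiableAt)
  rw [fderiv_fun_mul d1 d2]
  rw [aux_fderiv_shift V a y (hVd _), aux_fderiv_scale G c y (hGd _)]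
  simp [smul_eq_mul]

lemma aux_second_deriv_formula (V G : E → ℝ) (hV : ContDiff ℝ 2 V) (hG : ContDiff ℝ 2 G)
    (a : E) (c : ℝ) (u x : E) :
    fderiv ℝ (fun y => fderiv ℝ (fun z => V (z + a) * G (c • z)) y u) x u =
      fderiv ℝ (fun y => fderiv ℝ V y u) (x + a) u * G (c • x)
      + 2 * c * (fderiv ℝ V (x + a) u * fderiv ℝ G (c • x) u)
      + c ^ 2 * (V (x + a) * fderiv ℝ (fun y => fderiv ℝ G y u) (c • x) u) := by
  have hVd : Differentiable ℝ V := hV.differentiable (by norm_num)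
  have hGd : Differentiable ℝ G := hG.differentiable (by norm_num)
  have hDV : Differentiable ℝ (fun y => fderiv ℝ V y u) := aux_diff_fderiv_apply hV u
  have hDG : Differentiable ℝ (fun y => fderiv ℝ G y u) := aux_diff_fderiv_apply hG u
  rw [aux_inner_fderiv_formula V G hV hG a c u]
  have dV1 : DifferentiableAt ℝ (fun y : E => V (y + a)) x :=
    (hVd (x + a)).comp x (differentiable_id.add_const a).differentiableAt
  have dG1 : DifferentiableAt ℝ (fun y : E => G (c • y)) x :=
    (hGd (c • x)).comp x ((differentiable_id.const_smul c).differentiableAt)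
  have dDV : DifferentiableAt ℝ (fun y : E => fderiv ℝ V (y + a) u) x :=
    (hDV (x + a)).comp x (differentiable_id.add_const a).differentiableAt
  have dDG : DifferentiableAt ℝ (fun y : E => fderiv ℝ G (c • y) u) x :=
    (hDG (c • x)).comp x ((differentiable_id.const_smul c).differentiableAt)
  have dDGc : DifferentiableAt ℝ (fun y : E => c * fderiv ℝ G (c • y) u) x := dDG.const_mul c
  have dP1 : DifferentiableAt ℝ (fun y : E => V (y + a) * (c * fderiv ℝ G (c • y) u)) x :=
    dV1.mul dDGc
  have dP2 : DifferentiableAt ℝ (fun y : E => G (c • y) * fderiv ℝ V (y + a) u) x :=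
    dG1.mul dDV
  rw [fderiv_fun_add dP1 dP2, ContinuousLinearMap.add_apply]
  rw [fderiv_fun_mul dV1 dDGc, fderiv_fun_mul dG1 dDV]
  simp only [ContinuousLinearMap.add_apply, ContinuousLinearMap.smul_apply, smul_eq_mul]
  rw [fderiv_const_mul dDG c]
  rw [aux_fderiv_shift V a x (hVd _), aux_fderiv_scale G c x (hGd _)]
  rw [aux_fderiv_shift (fun y => fderiv ℝ V y u) a x (hDV _),
    aux_fderiv_scale (fun y => fderiv ℝ G y u) c x (hDG _)]
  simp only [ContinuousLinearMap.smul_apply, smul_eq_mul]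
  ring

lemma aux_cs_bound {F : Type*} [NormedAddCommGroup F] {f : E → F}
    (h1 : HasCompactSupport f) (h2 : Continuous f) :
    ∃ C : ℝ, 0 ≤ C ∧ ∀ x, ‖f x‖ ≤ C := by
  obtain ⟨C, hC⟩ := h1.exists_bound_of_continuousOn h2.continuousOn
  refine ⟨max C 0, le_max_right _ _, fun x => ?_⟩
  by_cases hx : x ∈ tsupport f
  · exact (hC x hx).trans (le_max_left _ _)
  · simp [image_eq_zero_of_notMem_tsupport hx]

lemma aux_second_g_bound {g : E → ℝ} (hg' : Differentiable ℝ (fderiv ℝ g)) (M₂ : ℝ)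
    (hM₂ : ∀ y, ‖fderiv ℝ (fderiv ℝ g) y‖ ≤ M₂) (u y : E) (hu : ‖u‖ ≤ 1) :
    |fderiv ℝ (fun w => fderiv ℝ g w u) y u| ≤ M₂ := by
  have hM₂0 : 0 ≤ M₂ := le_trans (by positivity) (hM₂ y)
  rw [fderiv_clm_apply (hg' y) (differentiableAt_const u)]
  simp only [fderiv_const, fderiv_fun_const, Pi.zero_apply, ContinuousLinearMap.comp_zero, zero_add,
    ContinuousLinearMap.add_apply, ContinuousLinearMap.flip_apply]
  calc |(fderiv ℝ (fderiv ℝ g) y) u u| = ‖(fderiv ℝ (fderiv ℝ g) y) u u‖ :=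
        (Real.norm_eq_abs _).symm
    _ ≤ ‖(fderiv ℝ (fderiv ℝ g) y) u‖ * ‖u‖ := ContinuousLinearMap.le_opNorm _ _
    _ ≤ (‖fderiv ℝ (fderiv ℝ g) y‖ * ‖u‖) * ‖u‖ :=
        mul_le_mul_of_nonneg_right (ContinuousLinearMap.le_opNorm _ _) (norm_nonneg _)
    _ ≤ (M₂ * 1) * 1 := by
        apply mul_le_mul _ hu (norm_nonneg _) (by positivity)
        exact mul_le_mul (hM₂ y) hu (norm_nonneg _) hM₂0
    _ = M₂ := by ring

end Aux

lemma aux_rpow_collect (c₀ r u : ℝ) (hc : 0 < c₀) (hr : 0 < r) (hu : 0 < u) (p q : ℝ) :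
    (c₀ * (r * u)) ^ p * (c₀ * u ^ 2) ^ q = c₀ ^ (p + q) * r ^ p * u ^ (p + 2 * q) := by
  rw [Real.mul_rpow hc.le (by positivity), Real.mul_rpow hc.le (by positivity),
    Real.mul_rpow hr.le hu.le, ← Real.rpow_natCast u 2, ← Real.rpow_mul hu.le,
    Real.rpow_add hc, Real.rpow_add hu]
  push_cast
  ring

lemma aux_rpow_collectB (c₀ u : ℝ) (hc : 0 < c₀) (hu : 0 < u) (q : ℝ) :
    (c₀ * u ^ 2) ^ q = c₀ ^ q * u ^ (2 * q) := by
  rw [Real.mul_rpow hc.le (by positivity), ← Real.rpow_natCast u 2, ← Real.rpow_mul hu.le]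
  push_cast
  ring_nf

lemma aux_rpow_split (A B α β : ℝ) (hA : 0 < A) (hB : 0 < B) (hα : 0 ≤ α) (hβ : 0 ≤ β) :
    (A + B) ^ (-(α + β)) ≤ A ^ (-α) * B ^ (-β) := by
  have hAB : (0:ℝ) < A + B := by linarith
  rw [Real.rpow_neg hAB.le, Real.rpow_neg hA.le, Real.rpow_neg hB.le, ← mul_inv]
  apply inv_anti₀ (by positivity)
  rw [Real.rpow_add hAB]
  exact mul_le_mul (Real.rpow_le_rpow hA.le (by linarith) hα)
    (Real.rpow_le_rpow hB.le (by linarith) hβ) (by positivity) (by positivity)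

lemma aux_le_sqrt_one_add_sq (y : ℝ) (hy : 0 ≤ y) : y ≤ Real.sqrt (1 + y ^ 2) := by
  exact Real.le_sqrt_of_sq_le (by nlinarith)
lemma aux_geom_scalar (δ s r t P na nx m : ℝ)
    (hδ0 : 0 ≤ δ) (hδ1 : δ < 1) (hP : |P| ≤ δ)
    (hs1 : 1 ≤ s) (hs2 : s ^ 2 = 2) (hs32 : s ≤ 3 / 2)
    (hr : 1 ≤ r) (ht : 1 ≤ |t|)
    (hna0 : 0 ≤ na)
    (hna : na ^ 2 = (r * t) ^ 2 + 2 * (r * t * (t ^ 2 / 2) * P) + (t ^ 2 / 2) ^ 2)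
    (hx : nx ≤ (1 - δ) / 4 * (r * |t|))
    (htri : na - nx ≤ m) :
    (1 - δ) / (2 * s) * (r * |t| + t ^ 2) ≤ m := by
  have hs0 : (0:ℝ) < s := lt_of_lt_of_le one_pos hs1
  have h1δ : 0 ≤ 1 - δ := by linarith
  set u : ℝ := r * |t| with hu
  set v : ℝ := t ^ 2 / 2 with hv
  have hu1 : 1 ≤ u := one_le_mul_of_one_le_of_one_le hr ht
  have hv0 : 0 ≤ v := by positivity
  have key1 : ((1 - δ) / s * (u + v)) ^ 2 ≤ na ^ 2 := by
    have hip1 : -(δ * (u * v)) ≤ r * t * v * P := by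
      have h1 : |r * t * v * P| ≤ δ * (u * v) := by
        rw [abs_mul, abs_mul]
        have h2 : |r * t| = u := by
          rw [hu, abs_mul, abs_of_nonneg (by linarith : (0:ℝ) ≤ r)]
        rw [h2, abs_of_nonneg hv0]
        calc u * v * |P| ≤ u * v * δ :=
              mul_le_mul_of_nonneg_left hP (mul_nonneg (by linarith) hv0)
          _ = δ * (u * v) := by ring
      linarith [neg_abs_le (r * t * v * P)]
    have hrt : (r * t) ^ 2 = u ^ 2 := by rw [hu, mul_pow, mul_pow, sq_abs]
    have hδs : ((1 - δ) / s) ^ 2 ≤ (1 - δ) / 2 := by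
      rw [div_pow, hs2]
      nlinarith
    have expand : ((1 - δ) / s * (u + v)) ^ 2 ≤ (1 - δ) / 2 * (u + v) ^ 2 := by
      rw [mul_pow]
      exact mul_le_mul_of_nonneg_right hδs (by positivity)
    refine expand.trans ?_
    rw [hna, hrt]
    nlinarith [sq_nonneg (u - v), mul_nonneg hδ0 (sq_nonneg (u - v)), hip1]
  have key2 : (1 - δ) / s * (u + v) ≤ na := by
    have h0 : 0 ≤ (1 - δ) / s * (u + v) := by positivity
    calc (1 - δ) / s * (u + v) = Real.sqrt (((1 - δ) / s * (u + v)) ^ 2) :=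
          (Real.sqrt_sq h0).symm
      _ ≤ Real.sqrt (na ^ 2) := Real.sqrt_le_sqrt key1
      _ = na := Real.sqrt_sq hna0
  have ht2 : t ^ 2 = 2 * v := by rw [hv]; ring
  have hw : (1 - δ) / s = 2 * ((1 - δ) / (2 * s)) := by
    rw [mul_div_assoc', mul_div_mul_left _ _ (two_ne_zero)]
  have e1' : (1 - δ) / s * (u + v) - (1 - δ) / (2 * s) * (u + 2 * v) = (1 - δ) / (2 * s) * u := by
    rw [hw]; ring
  have e2 : (1 - δ) / 4 * u ≤ (1 - δ) / (2 * s) * u := by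
    have h3 : (1 - δ) / 4 ≤ (1 - δ) / (2 * s) :=
      div_le_div_of_nonneg_left h1δ (by positivity) (by nlinarith)
    exact mul_le_mul_of_nonneg_right h3 (by linarith)
  calc (1 - δ) / (2 * s) * (u + t ^ 2) = (1 - δ) / (2 * s) * (u + 2 * v) := by rw [ht2]
    _ ≤ na - nx := by linarith
    _ ≤ m := htri

lemma aux_geom {F : Type*} [NormedAddCommGroup F] [InnerProductSpace ℝ F]
    (vhat e1 : F) (hvn : ‖vhat‖ = 1) (he : ‖e1‖ = 1) (δ : ℝ) (hδ0 : 0 ≤ δ) (hδ1 : δ < 1)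
    (hip : |⟪vhat, e1⟫_ℝ| ≤ δ) (r t : ℝ) (hr : 1 ≤ r) (ht : 1 ≤ |t|) (x : F)
    (hx : ‖x‖ ≤ (1 - δ) / 4 * (r * |t|)) :
    (1 - δ) / (2 * Real.sqrt 2) * (r * |t| + t ^ 2) ≤
      ‖x + ((r * t) • vhat + (t ^ 2 / 2) • e1)‖ := by
  have hs2 : Real.sqrt 2 ^ 2 = 2 := Real.sq_sqrt (by norm_num)
  have hs1 : 1 ≤ Real.sqrt 2 := by nlinarith [Real.sqrt_nonneg 2]
  have hs32 : Real.sqrt 2 ≤ 3 / 2 := by nlinarith [Real.sqrt_nonneg 2]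
  have hna : ‖(r * t) • vhat + (t ^ 2 / 2) • e1‖ ^ 2 =
      (r * t) ^ 2 + 2 * (r * t * (t ^ 2 / 2) * ⟪vhat, e1⟫_ℝ) + (t ^ 2 / 2) ^ 2 := by
    rw [norm_add_sq_real, real_inner_smul_left, real_inner_smul_right,
      norm_smul, norm_smul]
    simp [hvn, he, sq_abs, mul_pow]
    ring
  have tri : ‖(r * t) • vhat + (t ^ 2 / 2) • e1‖ - ‖x‖ ≤
      ‖x + ((r * t) • vhat + (t ^ 2 / 2) • e1)‖ := by
    have h1 : ‖(r * t) • vhat + (t ^ 2 / 2) • e1‖ ≤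
        ‖x + ((r * t) • vhat + (t ^ 2 / 2) • e1)‖ + ‖x‖ := by
      calc ‖(r * t) • vhat + (t ^ 2 / 2) • e1‖
          = ‖(x + ((r * t) • vhat + (t ^ 2 / 2) • e1)) - x‖ := by congr 1; abel
        _ ≤ _ := norm_sub_le _ _
    linarith
  exact aux_geom_scalar δ (Real.sqrt 2) r t ⟪vhat, e1⟫_ℝ _ ‖x‖ _ hδ0 hδ1 hip hs1 hs2 hs32
    hr ht (norm_nonneg _) hna hx tri

lemma aux_final_scalar (γD ε ε₀ c₀ lam r u C0 C1 C2 M₁ M₂ : ℝ) (n : ℕ)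
    (hγ1 : 1 / 4 < γD) (hγ2 : γD < 1 / 2) (hε : 0 < ε) (hε₀ : 0 < ε₀)
    (hε₀ε : ε₀ ≤ ε) (hε₀γ : ε₀ ≤ γD)
    (hc₀ : 0 < c₀) (hlam : 0 < lam) (hr : 1 ≤ r) (hu : 1 ≤ u)
    (hC0 : 0 < C0) (hC1 : 0 < C1) (hC2 : 0 < C2) (hM₁ : 0 ≤ M₁) (hM₂ : 0 ≤ M₂) :
    u * ((n : ℝ) * (C2 * ((c₀ * (r * u)) ^ (-(2 * γD - ε₀)) * (c₀ * u ^ 2) ^ (-(1 - γD + ε₀)))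
      + 2 * (lam * r * u)⁻¹ * (C1 * M₁ * (c₀ * u ^ 2) ^ (-γD - 1 / 2))
      + ((lam * r * u)⁻¹) ^ 2 * (C0 * M₂ * (c₀ * u ^ 2) ^ (-γD))))
    ≤ ((n : ℝ) * C2 * c₀ ^ (-(γD + 1)) + 2 * n * C1 * M₁ * lam⁻¹ * c₀ ^ (-γD - 1 / 2)
        + n * C0 * M₂ * (lam⁻¹) ^ 2 * c₀ ^ (-γD))
      * r ^ (-(2 * γD) + ε) * u ^ (-1 - ε₀) := by
  have hr0 : (0:ℝ) < r := lt_of_lt_of_le one_pos hr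
  have hu0 : (0:ℝ) < u := lt_of_lt_of_le one_pos hu
  have h1 : u * ((c₀ * (r * u)) ^ (-(2 * γD - ε₀)) * (c₀ * u ^ 2) ^ (-(1 - γD + ε₀)))
      ≤ c₀ ^ (-(γD + 1)) * (r ^ (-(2 * γD) + ε) * u ^ (-1 - ε₀)) := by
    rw [aux_rpow_collect c₀ r u hc₀ hr0 hu0]
    rw [show (-(2 * γD - ε₀)) + (-(1 - γD + ε₀)) = -(γD + 1) by ring]
    rw [show (-(2 * γD - ε₀)) + 2 * (-(1 - γD + ε₀)) = -2 - ε₀ by ring]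
    calc u * (c₀ ^ (-(γD + 1)) * r ^ (-(2 * γD - ε₀)) * u ^ (-2 - ε₀))
        = c₀ ^ (-(γD + 1)) * (r ^ (-(2 * γD - ε₀)) * (u ^ (1:ℝ) * u ^ (-2 - ε₀))) := by
          rw [Real.rpow_one]; ring
      _ = c₀ ^ (-(γD + 1)) * (r ^ (-(2 * γD - ε₀)) * u ^ (-1 - ε₀)) := by
          rw [← Real.rpow_add hu0]; ring_nf
      _ ≤ c₀ ^ (-(γD + 1)) * (r ^ (-(2 * γD) + ε) * u ^ (-1 - ε₀)) := by
          apply mul_le_mul_of_nonneg_left _ (by positivity)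
          exact mul_le_mul_of_nonneg_right
            (Real.rpow_le_rpow_of_exponent_le hr (by linarith)) (by positivity)
  have h2 : u * ((lam * r * u)⁻¹ * (c₀ * u ^ 2) ^ (-γD - 1 / 2))
      ≤ lam⁻¹ * c₀ ^ (-γD - 1 / 2) * (r ^ (-(2 * γD) + ε) * u ^ (-1 - ε₀)) := by
    rw [aux_rpow_collectB c₀ u hc₀ hu0, mul_inv, mul_inv]
    calc u * (lam⁻¹ * r⁻¹ * u⁻¹ * (c₀ ^ (-γD - 1 / 2) * u ^ (2 * (-γD - 1 / 2))))
        = lam⁻¹ * c₀ ^ (-γD - 1 / 2) * (r⁻¹ * ((u * u⁻¹) * u ^ (2 * (-γD - 1 / 2)))) := by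
          ring
      _ = lam⁻¹ * c₀ ^ (-γD - 1 / 2) * (r ^ (-1 : ℝ) * u ^ (2 * (-γD - 1 / 2))) := by
          rw [mul_inv_cancel₀ hu0.ne', one_mul, Real.rpow_neg_one]
      _ ≤ lam⁻¹ * c₀ ^ (-γD - 1 / 2) * (r ^ (-(2 * γD) + ε) * u ^ (-1 - ε₀)) := by
          apply mul_le_mul_of_nonneg_left _ (by positivity)
          exact mul_le_mul (Real.rpow_le_rpow_of_exponent_le hr (by linarith))
            (Real.rpow_le_rpow_of_exponent_le hu (by linarith)) (by positivity) (by positivity)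
  have h3 : u * (((lam * r * u)⁻¹) ^ 2 * (c₀ * u ^ 2) ^ (-γD))
      ≤ (lam⁻¹) ^ 2 * c₀ ^ (-γD) * (r ^ (-(2 * γD) + ε) * u ^ (-1 - ε₀)) := by
    rw [aux_rpow_collectB c₀ u hc₀ hu0, mul_inv, mul_inv]
    have hrr : (r⁻¹) ^ 2 = r ^ (-2 : ℝ) := by
      rw [← Real.rpow_neg_one, ← Real.rpow_natCast (r ^ (-1:ℝ)) 2, ← Real.rpow_mul hr0.le]
      norm_num
    calc u * ((lam⁻¹ * r⁻¹ * u⁻¹) ^ 2 * (c₀ ^ (-γD) * u ^ (2 * (-γD))))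
        = (lam⁻¹) ^ 2 * c₀ ^ (-γD) * ((r⁻¹) ^ 2 * (u⁻¹ * (u * u⁻¹) * u ^ (2 * (-γD)))) := by
          ring
      _ = (lam⁻¹) ^ 2 * c₀ ^ (-γD) * (r ^ (-2 : ℝ) * (u ^ (-1:ℝ) * u ^ (2 * (-γD)))) := by
          rw [mul_inv_cancel₀ hu0.ne', mul_one, Real.rpow_neg_one, hrr]
      _ = (lam⁻¹) ^ 2 * c₀ ^ (-γD) * (r ^ (-2 : ℝ) * u ^ (-1 + 2 * (-γD))) := by
          rw [← Real.rpow_add hu0]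
      _ ≤ (lam⁻¹) ^ 2 * c₀ ^ (-γD) * (r ^ (-(2 * γD) + ε) * u ^ (-1 - ε₀)) := by
          apply mul_le_mul_of_nonneg_left _ (by positivity)
          exact mul_le_mul (Real.rpow_le_rpow_of_exponent_le hr (by linarith))
            (Real.rpow_le_rpow_of_exponent_le hu (by linarith)) (by positivity) (by positivity)
  calc u * ((n : ℝ) * (C2 * ((c₀ * (r * u)) ^ (-(2 * γD - ε₀)) * (c₀ * u ^ 2) ^ (-(1 - γD + ε₀)))
      + 2 * (lam * r * u)⁻¹ * (C1 * M₁ * (c₀ * u ^ 2) ^ (-γD - 1 / 2))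
      + ((lam * r * u)⁻¹) ^ 2 * (C0 * M₂ * (c₀ * u ^ 2) ^ (-γD))))
      = (n : ℝ) * C2 * (u * ((c₀ * (r * u)) ^ (-(2 * γD - ε₀)) * (c₀ * u ^ 2) ^ (-(1 - γD + ε₀))))
        + 2 * n * C1 * M₁ * (u * ((lam * r * u)⁻¹ * (c₀ * u ^ 2) ^ (-γD - 1 / 2)))
        + n * C0 * M₂ * (u * (((lam * r * u)⁻¹) ^ 2 * (c₀ * u ^ 2) ^ (-γD))) := by ring
    _ ≤ (n : ℝ) * C2 * (c₀ ^ (-(γD + 1)) * (r ^ (-(2 * γD) + ε) * u ^ (-1 - ε₀)))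
        + 2 * n * C1 * M₁ * (lam⁻¹ * c₀ ^ (-γD - 1 / 2) * (r ^ (-(2 * γD) + ε) * u ^ (-1 - ε₀)))
        + n * C0 * M₂ * ((lam⁻¹) ^ 2 * c₀ ^ (-γD) * (r ^ (-(2 * γD) + ε) * u ^ (-1 - ε₀))) := by
          have c1 : (0:ℝ) ≤ (n : ℝ) * C2 := by positivity
          have c2 : (0:ℝ) ≤ 2 * (n : ℝ) * C1 * M₁ := by positivity
          have c3 : (0:ℝ) ≤ (n : ℝ) * C0 * M₂ := by positivity
          exact add_le_add (add_le_add (mul_le_mul_of_nonneg_left h1 c1)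
            (mul_le_mul_of_nonneg_left h2 c2)) (mul_le_mul_of_nonneg_left h3 c3)
    _ = ((n : ℝ) * C2 * c₀ ^ (-(γD + 1)) + 2 * n * C1 * M₁ * lam⁻¹ * c₀ ^ (-γD - 1 / 2)
        + n * C0 * M₂ * (lam⁻¹) ^ 2 * c₀ ^ (-γD)) * r ^ (-(2 * γD) + ε) * u ^ (-1 - ε₀) := by
          ring

lemma aux_M2_bound {E : Type*} [NormedAddCommGroup E] [NormedSpace ℝ E] (g : E → ℝ)
    (hgcs : HasCompactSupport g) (hDDgc : ContDiff ℝ (⊤ : ℕ∞) (fderiv ℝ (fderiv ℝ g))) :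
    ∃ C : ℝ, 0 ≤ C ∧ ∀ x, ‖fderiv ℝ (fderiv ℝ g) x‖ ≤ C :=
  aux_cs_bound (F := E →L[ℝ] E →L[ℝ] ℝ) ((hgcs.fderiv (𝕜 := ℝ)).fderiv (𝕜 := ℝ)) hDDgc.continuous

set_option maxHeartbeats 2000000 in
theorem stmt_18 (n : ℕ) (hn : 2 ≤ n)
    (e1 : EuclideanSpace ℝ (Fin n))
    (he1 : e1 = EuclideanSpace.single ⟨0, by omega⟩ (1 : ℝ))
    (vhat : EuclideanSpace ℝ (Fin n)) (hvhat : ‖vhat‖ = 1)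
    (δ : ℝ) (hδ : δ = |⟪vhat, e1⟫_ℝ|) (hδ1 : δ < 1)
    (lam : ℝ) (hlam : lam = (1 - δ) / (16 * Real.sqrt 2))
    (g : EuclideanSpace ℝ (Fin n) → ℝ) (hg : ContDiff ℝ (⊤ : ℕ∞) g)
    (hg0 : ∀ y, 0 ≤ g y) (hg1 : ∀ y, g y ≤ 1)
    (hg3 : ∀ y, ‖y‖ ≤ 3 → g y = 1) (hg4 : ∀ y, 4 ≤ ‖y‖ → g y = 0)
    (Vl : EuclideanSpace ℝ (Fin n) → ℝ) (hVl : ContDiff ℝ 2 Vl)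
    (C0 C1 C2 γD : ℝ) (hC0 : 0 < C0) (hC1 : 0 < C1) (hC2 : 0 < C2)
    (hγD : 1 / 4 < γD) (hγD' : γD < 1 / 2)
    (hVb : ∀ x, |Vl x| ≤ C0 * Real.sqrt (1 + ‖x‖ ^ 2) ^ (-γD))
    (hVd1 : ∀ x, ∀ j : Fin n,
      |fderiv ℝ Vl x (EuclideanSpace.single j 1)| ≤
        C1 * Real.sqrt (1 + ‖x‖ ^ 2) ^ (-γD - 1 / 2))
    (hVd2 : ∀ x, ∀ j k : Fin n,
      |fderiv ℝ (fun y => fderiv ℝ Vl y (EuclideanSpace.single k 1)) x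
          (EuclideanSpace.single j 1)| ≤
        C2 * Real.sqrt (1 + ‖x‖ ^ 2) ^ (-γD - 1)) :
    ∀ ε > (0 : ℝ), ∃ Cε > (0 : ℝ), ∀ r : ℝ, 1 ≤ r →
      ∫ t in {t : ℝ | 1 ≤ |t|}, |t| * lapSup (cutV Vl g lam vhat e1 r t) ≤
        Cε * r ^ (-(2 * γD) + ε) := by
  have hδ0 : 0 ≤ δ := by rw [hδ]; exact abs_nonneg _
  have h1δ : (0:ℝ) < 1 - δ := by linarith
  have hγ0 : (0:ℝ) < γD := by linarith
  have hsqrt2 : (0:ℝ) < Real.sqrt 2 := Real.sqrt_pos.mpr (by norm_num)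
  have hlam0 : 0 < lam := by
    rw [hlam]
    exact div_pos (by linarith) (by positivity)
  have hg2 : ContDiff ℝ 2 g := hg.of_le (WithTop.coe_le_coe.mpr (le_top : (2:ℕ∞) ≤ ⊤))
  have he1n : ‖e1‖ = 1 := by rw [he1, EuclideanSpace.norm_single]; norm_num
  have hgcs : HasCompactSupport g := by
    apply HasCompactSupport.intro (isCompact_closedBall (0 : EuclideanSpace ℝ (Fin n)) 4)
    intro x hx
    apply hg4
    simp only [Metric.mem_closedBall, dist_zero_right, not_le] at hx
    linarith
  have hDgc : ContDiff ℝ (⊤ : ℕ∞) (fderiv ℝ g) := hg.fderiv_right (by simp)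
  obtain ⟨M₁, hM₁0, hM₁⟩ := aux_cs_bound (hgcs.fderiv (𝕜 := ℝ)) hDgc.continuous
  have hDDgc : ContDiff ℝ (⊤ : ℕ∞) (fderiv ℝ (fderiv ℝ g)) := hDgc.fderiv_right (by simp)
  obtain ⟨M₂, hM₂0, hM₂⟩ := aux_M2_bound g hgcs hDDgc
  intro ε hε
  obtain ⟨ε₀, hε₀def⟩ : ∃ ε₀ : ℝ, ε₀ = min ε γD := ⟨_, rfl⟩
  have hε₀ : 0 < ε₀ := hε₀def ▸ lt_min hε hγ0
  have hε₀ε : ε₀ ≤ ε := hε₀def ▸ min_le_left _ _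
  have hε₀γ : ε₀ ≤ γD := hε₀def ▸ min_le_right _ _
  obtain ⟨c₀, hc₀def⟩ : ∃ c₀ : ℝ, c₀ = (1 - δ) / (2 * Real.sqrt 2) := ⟨_, rfl⟩
  have hc₀ : 0 < c₀ := by rw [hc₀def]; positivity
  obtain ⟨K, hKdef⟩ : ∃ K : ℝ, K = (n : ℝ) * C2 * c₀ ^ (-(γD + 1))
      + 2 * n * C1 * M₁ * lam⁻¹ * c₀ ^ (-γD - 1 / 2)
      + n * C0 * M₂ * (lam⁻¹) ^ 2 * c₀ ^ (-γD) := ⟨_, rfl⟩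
  have hK0 : 0 ≤ K := by
    rw [hKdef]
    have h1 : (0:ℝ) ≤ c₀ ^ (-(γD + 1)) := Real.rpow_nonneg hc₀.le _
    have h2 : (0:ℝ) ≤ c₀ ^ (-γD - 1 / 2) := Real.rpow_nonneg hc₀.le _
    have h3 : (0:ℝ) ≤ c₀ ^ (-γD) := Real.rpow_nonneg hc₀.le _
    have hn0 : (0:ℝ) ≤ (n : ℝ) := Nat.cast_nonneg n
    have hl1 : (0:ℝ) ≤ lam⁻¹ := inv_nonneg.mpr hlam0.le
    nlinarith [mul_nonneg (mul_nonneg hn0 hC2.le) h1,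
      mul_nonneg (mul_nonneg (mul_nonneg (mul_nonneg (by linarith : (0:ℝ) ≤ 2 * (n:ℝ)) hC1.le) hM₁0) hl1) h2,
      mul_nonneg (mul_nonneg (mul_nonneg (mul_nonneg hn0 hC0.le) hM₂0) (by positivity : (0:ℝ) ≤ (lam⁻¹)^2)) h3]
  obtain ⟨I, hIdef⟩ : ∃ I : ℝ, I = ∫ t in {t : ℝ | 1 ≤ |t|}, |t| ^ (-1 - ε₀) := ⟨_, rfl⟩
  have hI0 : 0 ≤ I := by
    rw [hIdef]
    exact integral_nonneg fun t => Real.rpow_nonneg (abs_nonneg t) _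
  refine ⟨K * I + 1, by positivity, fun r hr => ?_⟩
  have hr0 : (0:ℝ) < r := lt_of_lt_of_le one_pos hr
  have hrpow : (0:ℝ) < r ^ (-(2 * γD) + ε) := Real.rpow_pos_of_pos hr0 _
  have hmeas : MeasurableSet {t : ℝ | 1 ≤ |t|} :=
    measurableSet_le measurable_const continuous_abs.measurable
  have hmaj : IntegrableOn (fun t : ℝ => |t| ^ (-1 - ε₀)) {t : ℝ | 1 ≤ |t|} := by
    have hexp : (-1 - ε₀ : ℝ) < -1 := by linarith
    have hIoi : IntegrableOn (fun t : ℝ => |t| ^ (-1 - ε₀)) (Set.Ioi (1 : ℝ)) := by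
      refine (integrableOn_Ioi_rpow_of_lt hexp one_pos).congr_fun ?_ measurableSet_Ioi
      intro t ht1
      show t ^ (-1 - ε₀) = |t| ^ (-1 - ε₀)
      rw [abs_of_pos (lt_trans one_pos ht1)]
    have hIci : IntegrableOn (fun t : ℝ => |t| ^ (-1 - ε₀)) (Set.Ici (1 : ℝ)) :=
      Iff.mpr integrableOn_Ici_iff_integrableOn_Ioi hIoi
    have hIic : IntegrableOn (fun t : ℝ => |t| ^ (-1 - ε₀)) (Set.Iic (-1 : ℝ)) := by
      have h := (MeasurePreserving.integrableOn_comp_preimage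
        (Measure.measurePreserving_neg (volume : Measure ℝ))
        (Homeomorph.neg ℝ).measurableEmbedding).2 hIci
      have hpre : (Neg.neg : ℝ → ℝ) ⁻¹' (Set.Ici (1 : ℝ)) = Set.Iic (-1 : ℝ) := by
        ext s; simp [le_neg]
      rw [hpre] at h
      refine h.congr_fun ?_ measurableSet_Iic
      intro s _
      show |(-s)| ^ (-1 - ε₀) = |s| ^ (-1 - ε₀)
      rw [abs_neg]
    have hset : {t : ℝ | 1 ≤ |t|} = Set.Iic (-1 : ℝ) ∪ Set.Ici (1 : ℝ) := by
      ext s; simp [le_abs', Set.mem_union, or_comm]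
    rw [hset]
    exact hIic.union hIci
  -- the pointwise bound
  have hpt : ∀ t : ℝ, 1 ≤ |t| → |t| * lapSup (cutV Vl g lam vhat e1 r t) ≤
      K * r ^ (-(2 * γD) + ε) * |t| ^ (-1 - ε₀) := by
    intro t ht
    have ht0 : (0:ℝ) < |t| := lt_of_lt_of_le one_pos ht
    have ht21 : (1:ℝ) ≤ t ^ 2 := by
      have h := mul_le_mul ht ht (by norm_num) (abs_nonneg t)
      calc (1:ℝ) = 1 * 1 := by norm_num
        _ ≤ |t| * |t| := h
        _ = t * t := abs_mul_abs_self t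
        _ = t ^ 2 := (sq t).symm
    have hsq0 : (0:ℝ) < Real.sqrt (1 + t ^ 2) := Real.sqrt_pos.mpr (by positivity)
    have hsqt : |t| ≤ Real.sqrt (1 + t ^ 2) := Real.le_sqrt_of_sq_le (by rw [sq_abs]; linarith)
    have hsqt2 : Real.sqrt (1 + t ^ 2) ≤ Real.sqrt 2 * |t| := by
      rw [← Real.sqrt_sq (abs_nonneg t), ← Real.sqrt_mul (by norm_num : (0:ℝ) ≤ 2)]
      apply Real.sqrt_le_sqrt
      rw [sq_abs]
      linarith
    obtain ⟨ct, hctdef⟩ : ∃ ct : ℝ, ct = (lam * r * Real.sqrt (1 + t ^ 2))⁻¹ := ⟨_, rfl⟩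
    have hct0 : 0 < ct := by rw [hctdef]; positivity
    obtain ⟨a, hadef⟩ : ∃ a : EuclideanSpace ℝ (Fin n),
      a = (r * t) • vhat + (t ^ 2 / 2) • e1 := ⟨_, rfl⟩
    have hcut : cutV Vl g lam vhat e1 r t = fun z => Vl (z + a) * g (ct • z) := by
      funext z
      simp only [cutV]
      rw [add_assoc, ← hadef, ← hctdef]
    rw [hcut]
    obtain ⟨A, hAdef⟩ : ∃ A : ℝ, A = c₀ * (r * |t|) := ⟨_, rfl⟩
    obtain ⟨B, hBdef⟩ : ∃ B : ℝ, B = c₀ * |t| ^ 2 := ⟨_, rfl⟩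
    have hA0 : 0 < A := by rw [hAdef]; positivity
    have hB0 : 0 < B := by rw [hBdef]; positivity
    obtain ⟨lr, hlrdef⟩ : ∃ lr : ℝ, lr = (lam * r * |t|)⁻¹ := ⟨_, rfl⟩
    have hlr0 : 0 < lr := by rw [hlrdef]; positivity
    have hctlr : ct ≤ lr := by
      rw [hctdef, hlrdef]
      exact inv_anti₀ (by positivity) (mul_le_mul_of_nonneg_left hsqt (by positivity))
    obtain ⟨BND, hBNDdef⟩ : ∃ BND : ℝ, BND =
      (n : ℝ) * (C2 * (A ^ (-(2 * γD - ε₀)) * B ^ (-(1 - γD + ε₀)))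
        + 2 * lr * (C1 * M₁ * B ^ (-γD - 1 / 2))
        + lr ^ 2 * (C0 * M₂ * B ^ (-γD))) := ⟨_, rfl⟩
    have hb1 : (0:ℝ) ≤ C2 * (A ^ (-(2 * γD - ε₀)) * B ^ (-(1 - γD + ε₀))) :=
      mul_nonneg hC2.le (mul_nonneg (Real.rpow_nonneg hA0.le _) (Real.rpow_nonneg hB0.le _))
    have hb2 : (0:ℝ) ≤ 2 * lr * (C1 * M₁ * B ^ (-γD - 1 / 2)) :=
      mul_nonneg (by linarith) (mul_nonneg (mul_nonneg hC1.le hM₁0) (Real.rpow_nonneg hB0.le _))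
    have hb3 : (0:ℝ) ≤ lr ^ 2 * (C0 * M₂ * B ^ (-γD)) :=
      mul_nonneg (pow_nonneg hlr0.le 2)
        (mul_nonneg (mul_nonneg hC0.le hM₂0) (Real.rpow_nonneg hB0.le _))
    have hBND0 : 0 ≤ BND := by
      rw [hBNDdef]
      exact mul_nonneg (Nat.cast_nonneg n) (by linarith)
    have hsup : lapSup (fun z => Vl (z + a) * g (ct • z)) ≤ BND := by
      rw [lapSup]
      apply ciSup_le
      intro x
      by_cases hx4 : ‖ct • x‖ ≤ 4
      · -- geometric regime
        have hsm : ‖ct • x‖ = ct * ‖x‖ := by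
          rw [norm_smul, Real.norm_eq_abs, abs_of_pos hct0]
        have hxn1 : ‖x‖ ≤ 4 * (lam * r * Real.sqrt (1 + t ^ 2)) := by
          have h3 : (0:ℝ) < lam * r * Real.sqrt (1 + t ^ 2) := by positivity
          have h1 : (lam * r * Real.sqrt (1 + t ^ 2))⁻¹ * ‖x‖ ≤ 4 := by
            rw [← hctdef, ← hsm]; exact hx4
          calc ‖x‖ = ((lam * r * Real.sqrt (1 + t ^ 2))⁻¹ * ‖x‖) *
                (lam * r * Real.sqrt (1 + t ^ 2)) := by
                rw [mul_comm (lam * r * Real.sqrt (1 + t ^ 2))⁻¹ ‖x‖,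
                  inv_mul_cancel_right₀ h3.ne']
            _ ≤ 4 * (lam * r * Real.sqrt (1 + t ^ 2)) :=
                mul_le_mul_of_nonneg_right h1 h3.le
        have hxnorm : ‖x‖ ≤ (1 - δ) / 4 * (r * |t|) := by
          refine hxn1.trans ?_
          calc 4 * (lam * r * Real.sqrt (1 + t ^ 2)) ≤ 4 * (lam * r * (Real.sqrt 2 * |t|)) := by
                apply mul_le_mul_of_nonneg_left _ (by norm_num)
                exact mul_le_mul_of_nonneg_left hsqt2 (by positivity)
            _ = (1 - δ) / 4 * (r * |t|) := by
                rw [hlam]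
                field_simp
                ring
        have hg' := aux_geom vhat e1 hvhat he1n δ hδ0 hδ1 (le_of_eq hδ.symm) r t hr ht x hxnorm
        have hgeom : A + B ≤ ‖x + a‖ := by
          have hAB : A + B = (1 - δ) / (2 * Real.sqrt 2) * (r * |t| + t ^ 2) := by
            rw [hAdef, hBdef, hc₀def, sq_abs]; ring
          rw [hAB, hadef]
          exact hg'
        have hsqrtAB : A + B ≤ Real.sqrt (1 + ‖x + a‖ ^ 2) :=
          le_trans hgeom (aux_le_sqrt_one_add_sq _ (norm_nonneg _))
        have hBsq : B ≤ Real.sqrt (1 + ‖x + a‖ ^ 2) := le_trans (by linarith) hsqrtAB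
        have hj : ∀ j : Fin n,
            |fderiv ℝ (fun y => fderiv ℝ (fun z => Vl (z + a) * g (ct • z)) y
              (EuclideanSpace.single j 1)) x (EuclideanSpace.single j 1)| ≤
            C2 * (A ^ (-(2 * γD - ε₀)) * B ^ (-(1 - γD + ε₀)))
              + 2 * lr * (C1 * M₁ * B ^ (-γD - 1 / 2))
              + lr ^ 2 * (C0 * M₂ * B ^ (-γD)) := by
          intro j
          rw [aux_second_deriv_formula Vl g hVl hg2 a ct (EuclideanSpace.single j 1) x]
          have hun : ‖(EuclideanSpace.single j (1:ℝ) : EuclideanSpace ℝ (Fin n))‖ = 1 := by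
            rw [EuclideanSpace.norm_single]; norm_num
          have b1 : |fderiv ℝ (fun y => fderiv ℝ Vl y (EuclideanSpace.single j 1)) (x + a)
              (EuclideanSpace.single j 1)| ≤
              C2 * (A ^ (-(2 * γD - ε₀)) * B ^ (-(1 - γD + ε₀))) := by
            refine (hVd2 (x + a) j j).trans ?_
            calc C2 * Real.sqrt (1 + ‖x + a‖ ^ 2) ^ (-γD - 1)
                ≤ C2 * (A + B) ^ (-γD - 1) :=
                  mul_le_mul_of_nonneg_left
                    (Real.rpow_le_rpow_of_nonpos (by linarith) hsqrtAB (by linarith)) hC2.le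
              _ ≤ C2 * (A ^ (-(2 * γD - ε₀)) * B ^ (-(1 - γD + ε₀))) := by
                  apply mul_le_mul_of_nonneg_left _ hC2.le
                  rw [show (-γD - 1 : ℝ) = -((2 * γD - ε₀) + (1 - γD + ε₀)) by ring]
                  exact aux_rpow_split A B _ _ hA0 hB0 (by linarith) (by linarith)
          have bg : |g (ct • x)| ≤ 1 := by rw [abs_of_nonneg (hg0 _)]; exact hg1 _
          have b2 : |fderiv ℝ Vl (x + a) (EuclideanSpace.single j 1)| ≤
              C1 * B ^ (-γD - 1 / 2) := by
            refine (hVd1 (x + a) j).trans ?_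
            exact mul_le_mul_of_nonneg_left
              (Real.rpow_le_rpow_of_nonpos hB0 hBsq (by linarith)) hC1.le
          have b3 : |fderiv ℝ g (ct • x) (EuclideanSpace.single j 1)| ≤ M₁ := by
            calc |fderiv ℝ g (ct • x) (EuclideanSpace.single j 1)| =
                ‖fderiv ℝ g (ct • x) (EuclideanSpace.single j 1)‖ := (Real.norm_eq_abs _).symm
              _ ≤ ‖fderiv ℝ g (ct • x)‖ * ‖(EuclideanSpace.single j (1:ℝ) :
                  EuclideanSpace ℝ (Fin n))‖ := ContinuousLinearMap.le_opNorm _ _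
              _ ≤ M₁ * 1 := mul_le_mul (hM₁ _) (le_of_eq hun) (norm_nonneg _) hM₁0
              _ = M₁ := mul_one _
          have b4 : |Vl (x + a)| ≤ C0 * B ^ (-γD) := by
            refine (hVb (x + a)).trans ?_
            exact mul_le_mul_of_nonneg_left
              (Real.rpow_le_rpow_of_nonpos hB0 hBsq (by linarith)) hC0.le
          have b5 : |fderiv ℝ (fun y => fderiv ℝ g y (EuclideanSpace.single j 1)) (ct • x)
              (EuclideanSpace.single j 1)| ≤ M₂ :=
            aux_second_g_bound (hDgc.differentiable (by simp)) M₂ hM₂ _ _ (le_of_eq hun)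
          have habs : ∀ x1 y1 cx cy : ℝ, |x1| ≤ cx → |y1| ≤ cy → |x1 * y1| ≤ cx * cy := by
            intro x1 y1 cx cy hx1 hy1
            rw [abs_mul]
            exact mul_le_mul hx1 hy1 (abs_nonneg _) (le_trans (abs_nonneg _) hx1)
          refine (abs_add_le _ _).trans ?_
          have t12 := abs_add_le (fderiv ℝ (fun y => fderiv ℝ Vl y (EuclideanSpace.single j 1))
              (x + a) (EuclideanSpace.single j 1) * g (ct • x))
            (2 * ct * (fderiv ℝ Vl (x + a) (EuclideanSpace.single j 1) *
              fderiv ℝ g (ct • x) (EuclideanSpace.single j 1)))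
          have e1' : |fderiv ℝ (fun y => fderiv ℝ Vl y (EuclideanSpace.single j 1)) (x + a)
              (EuclideanSpace.single j 1) * g (ct • x)| ≤
              C2 * (A ^ (-(2 * γD - ε₀)) * B ^ (-(1 - γD + ε₀))) := by
            have h := habs _ _ _ _ b1 bg
            simpa using h
          have e2' : |2 * ct * (fderiv ℝ Vl (x + a) (EuclideanSpace.single j 1) *
              fderiv ℝ g (ct • x) (EuclideanSpace.single j 1))| ≤
              2 * lr * (C1 * M₁ * B ^ (-γD - 1 / 2)) := by
            rw [abs_mul, abs_of_pos (by positivity : (0:ℝ) < 2 * ct)]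
            calc 2 * ct * |fderiv ℝ Vl (x + a) (EuclideanSpace.single j 1) *
                fderiv ℝ g (ct • x) (EuclideanSpace.single j 1)|
                ≤ 2 * ct * (C1 * B ^ (-γD - 1 / 2) * M₁) :=
                  mul_le_mul_of_nonneg_left (habs _ _ _ _ b2 b3) (by positivity)
              _ ≤ 2 * lr * (C1 * B ^ (-γD - 1 / 2) * M₁) := by
                  apply mul_le_mul_of_nonneg_right _
                    (mul_nonneg (mul_nonneg hC1.le (Real.rpow_nonneg hB0.le _)) hM₁0)
                  linarith
              _ = 2 * lr * (C1 * M₁ * B ^ (-γD - 1 / 2)) := by ring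
          have e3' : |ct ^ 2 * (Vl (x + a) * fderiv ℝ (fun y => fderiv ℝ g y
              (EuclideanSpace.single j 1)) (ct • x) (EuclideanSpace.single j 1))| ≤
              lr ^ 2 * (C0 * M₂ * B ^ (-γD)) := by
            rw [abs_mul, abs_of_pos (by positivity : (0:ℝ) < ct ^ 2)]
            calc ct ^ 2 * |Vl (x + a) * fderiv ℝ (fun y => fderiv ℝ g y
                (EuclideanSpace.single j 1)) (ct • x) (EuclideanSpace.single j 1)|
                ≤ ct ^ 2 * (C0 * B ^ (-γD) * M₂) :=
                  mul_le_mul_of_nonneg_left (habs _ _ _ _ b4 b5) (by positivity)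
              _ ≤ lr ^ 2 * (C0 * B ^ (-γD) * M₂) := by
                  apply mul_le_mul_of_nonneg_right (pow_le_pow_left₀ hct0.le hctlr 2)
                    (mul_nonneg (mul_nonneg hC0.le (Real.rpow_nonneg hB0.le _)) hM₂0)
              _ = lr ^ 2 * (C0 * M₂ * B ^ (-γD)) := by ring
          linarith [t12, e1', e2', e3']
        calc |∑ j, fderiv ℝ (fun y => fderiv ℝ (fun z => Vl (z + a) * g (ct • z)) y
              (EuclideanSpace.single j 1)) x (EuclideanSpace.single j 1)|
            ≤ ∑ j, |fderiv ℝ (fun y => fderiv ℝ (fun z => Vl (z + a) * g (ct • z)) y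
              (EuclideanSpace.single j 1)) x (EuclideanSpace.single j 1)| :=
              Finset.abs_sum_le_sum_abs _ _
          _ ≤ ∑ _j : Fin n, (C2 * (A ^ (-(2 * γD - ε₀)) * B ^ (-(1 - γD + ε₀)))
              + 2 * lr * (C1 * M₁ * B ^ (-γD - 1 / 2))
              + lr ^ 2 * (C0 * M₂ * B ^ (-γD))) := Finset.sum_le_sum fun j _ => hj j
          _ = BND := by
              rw [Finset.sum_const, Finset.card_univ, Fintype.card_fin, nsmul_eq_mul, hBNDdef]
      · -- outside the cutoff : everything vanishes near x
        have hUopen : IsOpen {z : EuclideanSpace ℝ (Fin n) | 4 < ‖ct • z‖} :=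
          isOpen_lt continuous_const ((continuous_const_smul ct).norm)
        have hev : (fun z => Vl (z + a) * g (ct • z)) =ᶠ[nhds x] (fun _ => (0:ℝ)) := by
          filter_upwards [hUopen.mem_nhds (not_le.1 hx4)] with z hz
          simp [hg4 _ (le_of_lt hz)]
        have hz : ∀ j : Fin n, fderiv ℝ (fun y => fderiv ℝ (fun z => Vl (z + a) * g (ct • z)) y
            (EuclideanSpace.single j 1)) x (EuclideanSpace.single j 1) = 0 := by
          intro j
          have h2 : (fun y => fderiv ℝ (fun z => Vl (z + a) * g (ct • z)) y
              (EuclideanSpace.single j 1)) =ᶠ[nhds x] (fun _ => (0:ℝ)) := by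
            filter_upwards [hev.fderiv (𝕜 := ℝ)] with z hzz
            rw [hzz]
            simp
          rw [h2.fderiv_eq]
          simp
        simp only [hz, Finset.sum_const_zero, abs_zero]
        exact hBND0
    calc |t| * lapSup (fun z => Vl (z + a) * g (ct • z)) ≤ |t| * BND :=
        mul_le_mul_of_nonneg_left hsup (abs_nonneg t)
      _ ≤ K * r ^ (-(2 * γD) + ε) * |t| ^ (-1 - ε₀) := by
          rw [hBNDdef, hAdef, hBdef, hlrdef, hKdef]
          exact aux_final_scalar γD ε ε₀ c₀ lam r |t| C0 C1 C2 M₁ M₂ n hγD hγD' hε hε₀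
            hε₀ε hε₀γ hc₀ hlam0 hr ht hC0 hC1 hC2 hM₁0 hM₂0
  -- put everything together
  calc ∫ t in {t : ℝ | 1 ≤ |t|}, |t| * lapSup (cutV Vl g lam vhat e1 r t)
      ≤ ∫ t in {t : ℝ | 1 ≤ |t|}, K * r ^ (-(2 * γD) + ε) * |t| ^ (-1 - ε₀) := by
        apply integral_mono_of_nonneg
        · exact Filter.Eventually.of_forall fun t => mul_nonneg (abs_nonneg t)
            (Real.iSup_nonneg fun x => abs_nonneg _)
        · exact hmaj.const_mul (K * r ^ (-(2 * γD) + ε))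
        · exact (ae_restrict_iff' hmeas).mpr (Filter.Eventually.of_forall hpt)
      _ = K * r ^ (-(2 * γD) + ε) * I := by
        rw [hIdef, ← integral_const_mul]
      _ ≤ (K * I + 1) * r ^ (-(2 * γD) + ε) := by
        have h1 : K * r ^ (-(2 * γD) + ε) * I = K * I * r ^ (-(2 * γD) + ε) := by ring
        rw [h1]
        exact mul_le_mul_of_nonneg_right (by linarith) hrpow.le
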